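/- Every run r^C obtained from a chain C of bundles in a strand space satisfies MP2: for every event recv(u) appearing in r^C_a(m), there exists an agent b such that sent(u) appears in r^C_b(m). -/

import Mathlib

namespace StrandPaper

/-- A strand space over a message set `M`: a type of strands, each with a trace,
a finite sequence of signed terms.  A signed term `(true, u)` is `+u` (send) and
`(false, u)` is `-u` (receive). -/
structure StrandSpace (M : Type) where
  Strand : Type
  tr : Strand → List (Bool × M)

namespace StrandSpace

variable {M α : Type}

/-- Nodes are pairs of a strand and a (1-based) index. -/
abbrev Node (S : StrandSpace M) : Type := S.Strand × ℕ

/-- The signed term at a node (if the index is valid). -/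
def term (S : StrandSpace M) (n : S.Node) : Option (Bool × M) := (S.tr n.1)[n.2 - 1]?

def IsNode (S : StrandSpace M) (n : S.Node) : Prop := 1 ≤ n.2 ∧ n.2 ≤ (S.tr n.1).length

/-- `n1 → n2`: `term n1 = +u` and `term n2 = -u`. -/
def SendsTo (S : StrandSpace M) (n1 n2 : S.Node) : Prop :=
  ∃ u, S.term n1 = some (true, u) ∧ S.term n2 = some (false, u)

/-- `n1 ⇒ n2`: consecutive nodes of the same strand. -/
def SuccEdge (S : StrandSpace M) (n1 n2 : S.Node) : Prop :=
  n2.1 = n1.1 ∧ n2.2 = n1.2 + 1 ∧ S.IsNode n1 ∧ S.IsNode n2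

/-- A (possibly infinite) bundle: a subgraph of `(N, → ∪ ⇒)` satisfying B2–B4:
every negative node has a unique incoming `→` edge, `⇒`-downward closure and
acyclicity. -/
structure Bundle (S : StrandSpace M) where
  nodes : Set S.Node
  comm : S.Node → S.Node → Prop
  nodes_valid : ∀ n ∈ nodes, S.IsNode n
  comm_mem : ∀ n1 n2, comm n1 n2 → n1 ∈ nodes ∧ n2 ∈ nodes ∧ S.SendsTo n1 n2
  recv_unique : ∀ n2 ∈ nodes, ∀ u, S.term n2 = some (false, u) → ∃! n1, comm n1 n2
  succ_closed : ∀ n1 n2, S.SuccEdge n1 n2 → n2 ∈ nodes → n1 ∈ nodes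
  acyclic : ∀ n, ¬ Relation.TransGen
      (fun m1 m2 => comm m1 m2 ∨ (S.SuccEdge m1 m2 ∧ m1 ∈ nodes ∧ m2 ∈ nodes)) n n

variable {S : StrandSpace M}

/-- The causal edges (`→` or `⇒`) of a bundle. -/
def Bundle.edge (B : S.Bundle) (n1 n2 : S.Node) : Prop :=
  B.comm n1 n2 ∨ (S.SuccEdge n1 n2 ∧ n1 ∈ B.nodes ∧ n2 ∈ B.nodes)

/-- A causal path in a bundle. -/
def Bundle.CausalPath (B : S.Bundle) (l : List S.Node) : Prop :=
  l.Chain' B.edge ∧ ∀ n ∈ l, n ∈ B.nodes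

/-- The height of the bundle is at most `k`: every causal path has at most `k+1` nodes
(i.e. length at most `k`). -/
def Bundle.HeightLE (B : S.Bundle) (k : ℕ) : Prop :=
  ∀ l, B.CausalPath l → l.length ≤ k + 1

def Bundle.FiniteHeight (B : S.Bundle) : Prop := ∃ k, B.HeightLE k

noncomputable def Bundle.height (B : S.Bundle) : ℕ := sInf {k | B.HeightLE k}

/-- The height of a strand in a bundle: the largest `i` with `⟨s,i⟩ ∈ B` (0 if none). -/
noncomputable def Bundle.strandHeight (B : S.Bundle) (s : S.Strand) : ℕ :=
  sSup {i | (s, i) ∈ B.nodes}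

/-- The empty bundle. -/
def emptyBundle (S : StrandSpace M) : S.Bundle where
  nodes := ∅
  comm := fun _ _ => False
  nodes_valid := fun n hn => absurd hn (Set.notMem_empty n)
  comm_mem := fun _ _ h => h.elim
  recv_unique := fun n hn => absurd hn (Set.notMem_empty n)
  succ_closed := fun _ n2 _ h => absurd h (Set.notMem_empty n2)
  acyclic := by
    intro n h
    cases h with
    | single h1 => rcases h1 with h1 | ⟨_, h3, _⟩
                   · exact h1
                   · exact h3
    | tail _ h1 => rcases h1 with h1 | ⟨_, h3, _⟩
                   · exact h1
                   · exact h3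

/-- `B1 ⊑_f B2`: `f` maps each strand prefix in `B1` into `B2`, preserving terms
and `→` edges. -/
def Embeds (f : S.Strand ≃ S.Strand) (B1 B2 : S.Bundle) : Prop :=
  (∀ s i, (s, i) ∈ B1.nodes → (f s, i) ∈ B2.nodes ∧ S.term (s, i) = S.term (f s, i)) ∧
  (∀ s i s' j, B1.comm (s, i) (s', j) → B2.comm (f s, i) (f s', j))

/-- `B1 ↦ B2` via the agent-respecting bijection `f`: `B1 ⊑_f B2` and, for each
agent, at most one of its strands is extended, by at most (exactly) one node. -/
def StepVia (A : S.Strand → α) (f : S.Strand ≃ S.Strand) (B1 B2 : S.Bundle) : Prop :=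
  (∀ s, A (f s) = A s) ∧ Embeds f B1 B2 ∧
  ∀ s s', A s = A s' →
    B2.strandHeight (f s) ≠ B1.strandHeight s →
    B2.strandHeight (f s') ≠ B1.strandHeight s' →
    s = s' ∧ B2.strandHeight (f s) = B1.strandHeight s + 1

/-- `B1 ↦ B2`. -/
def Step (A : S.Strand → α) (B1 B2 : S.Bundle) : Prop := ∃ f, StepVia A f B1 B2

/-- A chain `B_0 ↦ B_1 ↦ ⋯` starting from the empty bundle. -/
structure Chain (A : S.Strand → α) where
  B : ℕ → S.Bundle
  init : B 0 = emptyBundle S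
  step : ∀ k, Step A (B k) (B (k + 1))

/-- The event (if any) performed by agent `a` in the step `B1 ↦ B2`:
the term of the single new node on a strand of `a`. -/
noncomputable def stepEvent (A : S.Strand → α) (B1 B2 : S.Bundle) (a : α) :
    Option (Bool × M) := by
  classical
  exact if h : ∃ p : (S.Strand ≃ S.Strand) × S.Strand,
      StepVia A p.1 B1 B2 ∧ A p.2 = a ∧
      B2.strandHeight (p.1 p.2) = B1.strandHeight p.2 + 1 then
    S.term (h.choose.1 h.choose.2, B2.strandHeight (h.choose.1 h.choose.2))
  else none

/-- The history of agent `a` at time `m` along a chain. -/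
noncomputable def Chain.hist {A : S.Strand → α} (C : Chain (S := S) A) (a : α) :
    ℕ → List (Bool × M)
  | 0 => []
  | m + 1 => C.hist a m ++ (stepEvent A (C.B m) (C.B (m + 1)) a).toList

end StrandSpace

/-- A run: a local state (history of events) for each agent at each time.
`(true, u)` is `sent(u)` and `(false, u)` is `recv(u)`. -/
def Run (α M : Type) := ℕ → α → List (Bool × M)

variable {M α : Type}

/-- MP1–MP3 with respect to generating history sets `V`. -/
def MP (V : α → Set (List (Bool × M))) (r : Run α M) : Prop :=
  (∀ a m, r m a ∈ V a) ∧
  (∀ a m u, (false, u) ∈ r m a → ∃ b, (true, u) ∈ r m b) ∧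
  (∀ a, r 0 a = []) ∧
  (∀ a m, r (m + 1) a = r m a ∨ ∃ e, r (m + 1) a = r m a ++ [e])

/-- The strand system generated by history sets `V`: all runs satisfying MP1–3. -/
def generated (V : α → Set (List (Bool × M))) : Set (Run α M) := {r | MP V r}

def IsStrandSystem (R : Set (Run α M)) : Prop :=
  ∃ V : α → Set (List (Bool × M)), R = generated V

/-- The run associated with a chain. -/
noncomputable def StrandSpace.Chain.run {S : StrandSpace M} {A : S.Strand → α}
    (C : StrandSpace.Chain (S := S) A) : Run α M := fun m a => C.hist a m

/-- `R(Σ, A, A)`: the translation of the strand space `S` under agent assignment `A`. -/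
def systemOf (S : StrandSpace M) (A : S.Strand → α) : Set (Run α M) :=
  {r | ∃ C : StrandSpace.Chain (S := S) A, C.run = r}

end StrandPaper


/-!
Every node of the bundle `B_k` has its term recorded in the history, at time `k`, of the agent
owning its strand: an old node was recorded earlier (steps preserve terms along the strand
bijection), and a new node is the top of the unique extended strand of its agent, whose term is
exactly the event of that step. Conversely every recorded event is the term of a node of `B_k`.
So a `recv(u)` in a history at time `m` is the term `-u` of a node of `B_m`; its incoming `→`
edge comes from a node `+u` of `B_m`, whose owner has `sent(u)` in its history at time `m`.
-/

namespace StrandPaper.StrandSpace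

variable {M α : Type} {S : StrandSpace M}

namespace Bundle

variable {B : S.Bundle} {s : S.Strand} {i j : ℕ}

lemma bddAbove_indices (B : S.Bundle) (s : S.Strand) : BddAbove {i | (s, i) ∈ B.nodes} :=
  ⟨(S.tr s).length, fun _ hi => (B.nodes_valid _ hi).2⟩

lemma le_strandHeight (h : (s, i) ∈ B.nodes) : i ≤ B.strandHeight s :=
  le_csSup (bddAbove_indices B s) h

lemma mem_of_le_of_mem (hi : 1 ≤ i) (hij : i ≤ j) (hj : (s, j) ∈ B.nodes) :
    (s, i) ∈ B.nodes := by
  induction j, hij using Nat.le_induction with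
  | base => exact hj
  | succ j hij ih =>
    have hvalid := B.nodes_valid _ hj
    have hj_le : j ≤ (S.tr s).length := by have := hvalid.2; dsimp only at this; omega
    exact ih (B.succ_closed (s, j) (s, j + 1) ⟨rfl, rfl, ⟨by omega, hj_le⟩, hvalid⟩ hj)

lemma mem_of_le_strandHeight (hi : 1 ≤ i) (hle : i ≤ B.strandHeight s) : (s, i) ∈ B.nodes := by
  have hne : {j | (s, j) ∈ B.nodes}.Nonempty := by
    by_contra hempty
    rw [Set.not_nonempty_iff_eq_empty] at hempty
    simp only [strandHeight, hempty, csSup_empty, bot_eq_zero'] at hle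
    omega
  exact mem_of_le_of_mem hi hle (Nat.sSup_mem hne (bddAbove_indices B s))

end Bundle

variable {A : S.Strand → α} {f : S.Strand ≃ S.Strand} {B₁ B₂ : S.Bundle}

/-- A node of `B₂` either comes from `B₁` through `f`, or is the top of a strand extended
in this step. -/
lemma StepVia.mem_nodes_cases (hf : StepVia A f B₁ B₂) {σ : S.Strand} {i : ℕ}
    (hn : (σ, i) ∈ B₂.nodes) :
    ((f.symm σ, i) ∈ B₁.nodes ∧ S.term (f.symm σ, i) = S.term (σ, i)) ∨
      (B₂.strandHeight σ = B₁.strandHeight (f.symm σ) + 1 ∧ i = B₂.strandHeight σ) := by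
  have hfσ : f (f.symm σ) = σ := f.apply_symm_apply σ
  have hi : 1 ≤ i := (B₂.nodes_valid _ hn).1
  have hi_le : i ≤ B₂.strandHeight σ := Bundle.le_strandHeight hn
  by_cases hold : i ≤ B₁.strandHeight (f.symm σ)
  · have hmem := Bundle.mem_of_le_strandHeight hi hold
    exact Or.inl ⟨hmem, by simpa only [hfσ] using (hf.2.1.1 _ _ hmem).2⟩
  · have hne : B₂.strandHeight (f (f.symm σ)) ≠ B₁.strandHeight (f.symm σ) := by
      rw [hfσ]; omega
    have hsucc := (hf.2.2 _ _ rfl hne hne).2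
    rw [hfσ] at hsucc
    exact Or.inr ⟨hsucc, by omega⟩

lemma exists_stepEvent_eq {a : α}
    (h : ∃ f s, StepVia A f B₁ B₂ ∧ A s = a ∧ B₂.strandHeight (f s) = B₁.strandHeight s + 1) :
    ∃ f s, StepVia A f B₁ B₂ ∧ A s = a ∧ B₂.strandHeight (f s) = B₁.strandHeight s + 1 ∧
      stepEvent A B₁ B₂ a = S.term (f s, B₂.strandHeight (f s)) := by
  have hp : ∃ p : (S.Strand ≃ S.Strand) × S.Strand, StepVia A p.1 B₁ B₂ ∧ A p.2 = a ∧
      B₂.strandHeight (p.1 p.2) = B₁.strandHeight p.2 + 1 := by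
    obtain ⟨f, s, hs⟩ := h
    exact ⟨(f, s), hs⟩
  obtain ⟨hstep, ha, hext⟩ := hp.choose_spec
  exact ⟨_, _, hstep, ha, hext, by rw [stepEvent, dif_pos hp]⟩

lemma exists_node_of_stepEvent_eq_some {a : α} {t : Bool × M}
    (h : stepEvent A B₁ B₂ a = some t) : ∃ n ∈ B₂.nodes, S.term n = some t := by
  by_cases hext : ∃ f s, StepVia A f B₁ B₂ ∧ A s = a ∧
      B₂.strandHeight (f s) = B₁.strandHeight s + 1
  · obtain ⟨f, s, -, -, hsucc, hev⟩ := exists_stepEvent_eq hext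
    exact ⟨_, Bundle.mem_of_le_strandHeight (by omega) le_rfl, hev ▸ h⟩
  · rw [stepEvent, dif_neg (fun ⟨p, hp⟩ => hext ⟨p.1, p.2, hp⟩)] at h
    exact absurd h (Option.some_ne_none t).symm

namespace Chain

variable (C : Chain (S := S) A)

lemma mem_hist_succ {a : α} {k : ℕ} {t : Bool × M} :
    t ∈ C.hist a (k + 1) ↔ t ∈ C.hist a k ∨ stepEvent A (C.B k) (C.B (k + 1)) a = some t := by
  rw [hist, List.mem_append, Option.mem_toList]

lemma term_mem_hist (k : ℕ) {n : S.Node} (hn : n ∈ (C.B k).nodes) {t : Bool × M}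
    (ht : S.term n = some t) : t ∈ C.hist (A n.1) k := by
  induction k generalizing n with
  | zero => rw [C.init] at hn; exact absurd hn (Set.notMem_empty n)
  | succ k ih =>
    obtain ⟨σ, i⟩ := n
    obtain ⟨f, hf⟩ := C.step k
    rw [mem_hist_succ]
    rcases hf.mem_nodes_cases hn with ⟨hold, hterm⟩ | ⟨hext, rfl⟩
    · have hagent : A (f.symm σ) = A σ := by rw [← hf.1, f.apply_symm_apply]
      exact Or.inl (hagent ▸ ih hold (hterm ▸ ht))
    -- The step recorded by `stepEvent` may use another bijection `g` than `f`; under `g` the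
    -- node is again either old or the top of the one strand of its agent that `g` extends.
    obtain ⟨g, s, hg, hagent, hsucc, hev⟩ := exists_stepEvent_eq
      ⟨f, f.symm σ, hf, by rw [← hf.1, f.apply_symm_apply], by rwa [f.apply_symm_apply]⟩
    rcases hg.mem_nodes_cases hn with ⟨hold, hterm⟩ | ⟨hext', -⟩
    · have hagent' : A (g.symm σ) = A σ := by rw [← hg.1, g.apply_symm_apply]
      exact Or.inl (hagent' ▸ ih hold (hterm ▸ ht))
    · have hgσ : g (g.symm σ) = σ := g.apply_symm_apply σ
      have hagent' : A (g.symm σ) = A s := by rw [← hg.1, hgσ, hagent]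
      have hs : g.symm σ = s :=
        (hg.2.2 _ _ hagent' (by rw [hgσ]; omega) (by omega)).1
      rw [← hs, hgσ] at hev
      exact Or.inr (hev.trans ht)

lemma exists_node_of_mem_hist {a : α} {k : ℕ} {t : Bool × M} (h : t ∈ C.hist a k) :
    ∃ n ∈ (C.B k).nodes, S.term n = some t := by
  induction k with
  | zero => exact absurd h List.not_mem_nil
  | succ k ih =>
    rcases (C.mem_hist_succ).1 h with h | h
    · obtain ⟨⟨s, i⟩, hn, ht⟩ := ih h
      obtain ⟨f, hf⟩ := C.step k
      obtain ⟨hmem, hterm⟩ := hf.2.1.1 s i hn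
      exact ⟨_, hmem, hterm ▸ ht⟩
    · exact exists_node_of_stepEvent_eq_some h

end Chain

end StrandPaper.StrandSpace

open StrandPaper StrandPaper.StrandSpace

/-- Every run obtained from a chain of bundles satisfies MP2: for every
`recv(u)` in agent `a`'s history at time `m`, some agent `b` has `sent(u)` in its
history at time `m`. -/
theorem chain_run_satisfies_MP2 {M α : Type} {S : StrandSpace M} {A : S.Strand → α}
    (C : Chain (S := S) A) (a : α) (m : ℕ) (u : M)
    (h : (false, u) ∈ C.hist a m) : ∃ b : α, (true, u) ∈ C.hist b m := by
  obtain ⟨n₂, hn₂, hrecv⟩ := C.exists_node_of_mem_hist h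
  obtain ⟨n₁, hcomm⟩ := ((C.B m).recv_unique n₂ hn₂ u hrecv).exists
  obtain ⟨hn₁, -, u', hsend, hrecv'⟩ := (C.B m).comm_mem n₁ n₂ hcomm
  obtain rfl : u = u' := by simpa [hrecv] using hrecv'
  exact ⟨A n₁.1, C.term_mem_hist m hn₁ hsend⟩
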